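/- arXiv:1407.3906 — 3 statements merged into one kernel-verified Lean document; each statement's English description precedes it below -/
import Mathlib

section
/- Let (M,d,μ) be a doubling metric measure space, let p ∈ [1,∞) and η > 0, and let f ∈ L^p_loc(M,μ). Then there is a constant C, depending only on the doubling constant, p and η, such that for every ball B and all Lebesgue points x, y of f lying in B one has |f(x) − f(y)| ≤ C d(x,y)^η · sup_{B̃ ⊆ 6B} r(B̃)^{−η} · p-osc_{B̃}(f), where the supremum is over all balls B̃ contained in 6B and r(B̃) denotes the radius of B̃. Equivalently, the Hölder seminorm ess sup_{x,y ∈ B, x≠y} |f(x)−f(y)|/d(x,y)^η is bounded by C · sup_{B̃ ⊆ 6B} r(B̃)^{−η} p-osc_{B̃}(f). (Morrey–Campanato embedding, Lemma 3.3 of the paper.) -/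
/-!
At a Lebesgue point `x`, `f x` is the limit of the averages of `f` over the balls
`B(x, r 2⁻ᵏ)`. By doubling, consecutive averages differ by at most `C_D` times the oscillation
over the larger ball, which is at most `K (r 2⁻ᵏ)^η`; the telescoping series is geometric, so
`|f x - ⨍_{B(x,r)} f| ≲ K r^η`. With `d = dist x y`, apply this at `x` with `r = 2d` and at `y`
with `r = d`, and compare the two averages through `B(y, d) ⊆ B(x, 2d)`, whose measures are
comparable by doubling twice.
-/

open MeasureTheory Metric

/-- The `L^p` oscillation of `f` over the set `B`:
`p-osc_B(f) = (⨍_B |f - ⨍_B f dμ|^p dμ)^(1/p)`. -/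
noncomputable def posc {M : Type*} [MeasurableSpace M] (μ : Measure M) (p : ℝ)
    (B : Set M) (f : M → ℝ) : ℝ :=
  (⨍ y in B, |f y - ⨍ z in B, f z ∂μ| ^ p ∂μ) ^ (1 / p)

/-- `(M, d, μ)` is doubling with constant `C_D`. -/
def IsDoublingWith {M : Type*} [PseudoMetricSpace M] [MeasurableSpace M]
    (μ : Measure M) (C_D : ℝ) : Prop :=
  ∀ (x : M) (r : ℝ), 0 < r → μ (ball x (2 * r)) ≤ ENNReal.ofReal C_D * μ (ball x r)

/-- `x` is a Lebesgue point of `f`:  `⨍_{B(x,r)} |f - f(x)| dμ → 0` as `r → 0⁺`. -/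
def LebesguePt {M : Type*} [PseudoMetricSpace M] [MeasurableSpace M]
    (μ : Measure M) (f : M → ℝ) (x : M) : Prop :=
  Filter.Tendsto (fun r : ℝ => ⨍ y in ball x r, |f y - f x| ∂μ)
    (nhdsWithin 0 (Set.Ioi 0)) (nhds 0)

open Filter Topology

namespace MeasureTheory

variable {α : Type*} [MeasurableSpace α] {μ : Measure α} {s t : Set α}

theorem abs_setAverage_le (f : α → ℝ) (s : Set α) :
    |⨍ y in s, f y ∂μ| ≤ ⨍ y in s, |f y| ∂μ :=
  abs_integral_le_integral_abs

theorem setAverage_sub_const (hs₀ : μ s ≠ 0) (hs : μ s ≠ ⊤) {f : α → ℝ}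
    (hf : IntegrableOn f s μ) (c : ℝ) :
    ⨍ y in s, (f y - c) ∂μ = ⨍ y in s, f y ∂μ - c := by
  nth_rw 2 [← setAverage_const hs₀ hs c]
  simp only [setAverage_eq']
  exact integral_sub ((integrable_inv_smul_measure hs₀ hs).2 hf)
    ((integrable_inv_smul_measure hs₀ hs).2 (integrableOn_const hs))

theorem abs_setAverage_sub_le (hs₀ : μ s ≠ 0) (hs : μ s ≠ ⊤) {f : α → ℝ}
    (hf : IntegrableOn f s μ) (c : ℝ) :
    |⨍ y in s, f y ∂μ - c| ≤ ⨍ y in s, |f y - c| ∂μ := by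
  rw [← setAverage_sub_const hs₀ hs hf]
  exact abs_setAverage_le _ s

theorem setAverage_abs_le_rpow (hs₀ : μ s ≠ 0) (hs : μ s ≠ ⊤) {p : ℝ} (hp : 1 ≤ p)
    {g : α → ℝ} (hg : MemLp g (ENNReal.ofReal p) (μ.restrict s)) :
    ⨍ y in s, |g y| ∂μ ≤ (⨍ y in s, |g y| ^ p ∂μ) ^ (1 / p) := by
  have hp₀ : 0 < p := zero_lt_one.trans_le hp
  have : IsFiniteMeasure (μ.restrict s) := isFiniteMeasure_restrict.2 hs
  have hgp : Integrable (fun y => |g y| ^ p) (μ.restrict s) := by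
    simpa [ENNReal.toReal_ofReal hp₀.le, Real.norm_eq_abs] using
      hg.integrable_norm_rpow (by simpa using hp₀) ENNReal.ofReal_ne_top
  have jensen : (⨍ y in s, |g y| ∂μ) ^ p ≤ ⨍ y in s, |g y| ^ p ∂μ :=
    (convexOn_rpow hp).map_set_average_le (Real.continuous_rpow_const hp₀.le).continuousOn
      isClosed_Ici hs₀ hs (.of_forall fun y => abs_nonneg (g y))
      (hg.integrable (ENNReal.one_le_ofReal.2 hp)).abs hgp
  have havg : 0 ≤ ⨍ y in s, |g y| ∂μ := integral_nonneg fun y => abs_nonneg (g y)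
  calc ⨍ y in s, |g y| ∂μ = ((⨍ y in s, |g y| ∂μ) ^ p) ^ (1 / p) := by
        rw [one_div, Real.rpow_rpow_inv havg hp₀.ne']
    _ ≤ (⨍ y in s, |g y| ^ p ∂μ) ^ (1 / p) := by gcongr

theorem setAverage_le_mul_setAverage_of_subset (hts : t ⊆ s) (ht₀ : μ t ≠ 0) (hs : μ s ≠ ⊤)
    {κ : ℝ} (hκ₀ : 0 ≤ κ) (hκ : μ s ≤ ENNReal.ofReal κ * μ t) {g : α → ℝ} (hg₀ : 0 ≤ g)
    (hg : IntegrableOn g s μ) :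
    ⨍ y in t, g y ∂μ ≤ κ * ⨍ y in s, g y ∂μ := by
  have hs₀ : μ s ≠ 0 := fun h => ht₀ (measure_mono_null hts h)
  have ht : μ t ≠ ⊤ := ne_top_of_le_ne_top hs (measure_mono hts)
  have hs_pos : 0 < μ.real s := ENNReal.toReal_pos hs₀ hs
  have ht_pos : 0 < μ.real t := ENNReal.toReal_pos ht₀ ht
  have hst : μ.real s ≤ κ * μ.real t := by
    have := ENNReal.toReal_mono (ENNReal.mul_ne_top ENNReal.ofReal_ne_top ht) hκ
    rwa [ENNReal.toReal_mul, ENNReal.toReal_ofReal hκ₀] at this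
  have hinv : (μ.real t)⁻¹ ≤ κ * (μ.real s)⁻¹ := by
    rw [← div_eq_mul_inv, le_div_iff₀ hs_pos, inv_mul_le_iff₀ ht_pos]
    linarith
  have hint₀ : 0 ≤ ∫ y in s, g y ∂μ := integral_nonneg hg₀
  simp only [setAverage_eq, smul_eq_mul]
  calc (μ.real t)⁻¹ * ∫ y in t, g y ∂μ ≤ (μ.real t)⁻¹ * ∫ y in s, g y ∂μ := by
        gcongr
        exact .of_forall hg₀
    _ ≤ κ * (μ.real s)⁻¹ * ∫ y in s, g y ∂μ := by gcongr
    _ = κ * ((μ.real s)⁻¹ * ∫ y in s, g y ∂μ) := mul_assoc _ _ _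

theorem setAverage_abs_sub_setAverage_le_posc (hs₀ : μ s ≠ 0) (hs : μ s ≠ ⊤) {p : ℝ}
    (hp : 1 ≤ p) {f : α → ℝ} (hf : MemLp f (ENNReal.ofReal p) (μ.restrict s)) :
    ⨍ y in s, |f y - ⨍ z in s, f z ∂μ| ∂μ ≤ posc μ p s f :=
  have : IsFiniteMeasure (μ.restrict s) := isFiniteMeasure_restrict.2 hs
  setAverage_abs_le_rpow hs₀ hs hp (hf.sub (memLp_const _))

theorem abs_setAverage_sub_setAverage_le_mul_posc (hts : t ⊆ s) (ht₀ : μ t ≠ 0)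
    (hs : μ s ≠ ⊤) {κ : ℝ} (hκ₀ : 0 ≤ κ) (hκ : μ s ≤ ENNReal.ofReal κ * μ t) {p : ℝ}
    (hp : 1 ≤ p) {f : α → ℝ} (hf : MemLp f (ENNReal.ofReal p) (μ.restrict s)) :
    |⨍ y in t, f y ∂μ - ⨍ y in s, f y ∂μ| ≤ κ * posc μ p s f := by
  have : IsFiniteMeasure (μ.restrict s) := isFiniteMeasure_restrict.2 hs
  have hs₀ : μ s ≠ 0 := fun h => ht₀ (measure_mono_null hts h)
  have hfs : IntegrableOn f s μ := hf.integrable (ENNReal.one_le_ofReal.2 hp)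
  set c := ⨍ y in s, f y ∂μ
  calc |⨍ y in t, f y ∂μ - c|
      ≤ ⨍ y in t, |f y - c| ∂μ :=
        abs_setAverage_sub_le ht₀ (ne_top_of_le_ne_top hs (measure_mono hts))
          (hfs.mono_set hts) c
    _ ≤ κ * ⨍ y in s, |f y - c| ∂μ :=
        setAverage_le_mul_setAverage_of_subset hts ht₀ hs hκ₀ hκ (fun y => abs_nonneg _)
          (hfs.sub (integrableOn_const hs)).abs
    _ ≤ κ * posc μ p s f := by gcongr; exact setAverage_abs_sub_setAverage_le_posc hs₀ hs hp hf

end MeasureTheory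

section Doubling

variable {M : Type*} [PseudoMetricSpace M] [MeasurableSpace M] {μ : Measure M} {C_D : ℝ}
  {f : M → ℝ} {x : M}

theorem IsDoublingWith.measure_ball_two_mul_le_sq_mul (hdoub : IsDoublingWith μ C_D)
    (hC_D : 0 ≤ C_D) {x y : M} {r : ℝ} (hr : 0 < r) (hxy : dist x y ≤ r) :
    μ (ball x (2 * r)) ≤ ENNReal.ofReal (C_D ^ 2) * μ (ball y r) :=
  calc μ (ball x (2 * r)) ≤ μ (ball y (2 * (2 * r))) :=
        measure_mono (ball_subset_ball' (by linarith))
    _ ≤ ENNReal.ofReal C_D * μ (ball y (2 * r)) := hdoub y _ (by positivity)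
    _ ≤ ENNReal.ofReal C_D * (ENNReal.ofReal C_D * μ (ball y r)) := by
        gcongr; exact hdoub y r hr
    _ = ENNReal.ofReal (C_D ^ 2) * μ (ball y r) := by
        rw [← mul_assoc, ← ENNReal.ofReal_mul hC_D, sq]

theorem LebesguePt.tendsto_setAverage_ball (hx : LebesguePt μ f x)
    (hμ : ∀ r, 0 < r → 0 < μ (ball x r) ∧ μ (ball x r) < ⊤)
    (hf : ∀ r, 0 < r → IntegrableOn f (ball x r) μ) :
    Tendsto (fun r => ⨍ y in ball x r, f y ∂μ) (𝓝[>] 0) (𝓝 (f x)) := by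
  rw [tendsto_iff_dist_tendsto_zero]
  refine squeeze_zero' (.of_forall fun r => dist_nonneg) ?_ hx
  filter_upwards [self_mem_nhdsWithin] with r (hr : 0 < r)
  exact abs_setAverage_sub_le (hμ r hr).1.ne' (hμ r hr).2.ne (hf r hr) (f x)

theorem LebesguePt.abs_sub_setAverage_ball_le (hx : LebesguePt μ f x)
    (hdoub : IsDoublingWith μ C_D) (hC_D : 0 ≤ C_D)
    (hμ : ∀ r, 0 < r → 0 < μ (ball x r) ∧ μ (ball x r) < ⊤) {p : ℝ} (hp : 1 ≤ p)
    (hf : ∀ r, 0 < r → MemLp f (ENNReal.ofReal p) (μ.restrict (ball x r)))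
    {η : ℝ} (hη : 0 < η) {r K : ℝ} (hr : 0 < r)
    (hK : ∀ ρ, 0 < ρ → ρ ≤ r → posc μ p (ball x ρ) f ≤ K * ρ ^ η) :
    |f x - ⨍ y in ball x r, f y ∂μ| ≤ C_D * (1 - (2 ^ η)⁻¹)⁻¹ * K * r ^ η := by
  set q : ℝ := (2 ^ η)⁻¹
  have hq₀ : 0 ≤ q := by positivity
  have hq₁ : q < 1 := inv_lt_one_of_one_lt₀ (Real.one_lt_rpow one_lt_two hη)
  set u : ℕ → ℝ := fun k => ⨍ y in ball x (r / 2 ^ k), f y ∂μ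
  have hrad : ∀ k : ℕ, 0 < r / 2 ^ k := fun k => by positivity
  have hstep : ∀ k, dist (u k) (u (k + 1)) ≤ C_D * K * r ^ η * q ^ k := by
    intro k
    have hhalf : 2 * (r / 2 ^ (k + 1)) = r / 2 ^ k := by rw [pow_succ]; field_simp
    rw [dist_comm, Real.dist_eq]
    calc |u (k + 1) - u k| ≤ C_D * posc μ p (ball x (r / 2 ^ k)) f :=
          abs_setAverage_sub_setAverage_le_mul_posc
            (ball_subset_ball (by rw [← hhalf]; linarith [hrad (k + 1)]))
            (hμ _ (hrad _)).1.ne' (hμ _ (hrad k)).2.ne hC_D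
            (hhalf ▸ hdoub x _ (hrad (k + 1))) hp (hf _ (hrad k))
      _ ≤ C_D * (K * (r / 2 ^ k) ^ η) := by
          gcongr
          exact hK _ (hrad k) (div_le_self hr.le (one_le_pow₀ one_le_two))
      _ = C_D * K * r ^ η * q ^ k := by
          rw [Real.div_rpow hr.le (by positivity), ← Real.rpow_pow_comm zero_le_two, inv_pow]
          ring
  have hsum : Summable fun k : ℕ => C_D * K * r ^ η * q ^ k :=
    (summable_geometric_of_lt_one hq₀ hq₁).mul_left _
  have hint : ∀ r, 0 < r → IntegrableOn f (ball x r) μ := fun r hr =>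
    have := isFiniteMeasure_restrict.2 (hμ r hr).2.ne
    (hf r hr).integrable (ENNReal.one_le_ofReal.2 hp)
  have hlim : Tendsto u atTop (𝓝 (f x)) :=
    (hx.tendsto_setAverage_ball hμ hint).comp
      (tendsto_nhdsWithin_iff.2 ⟨tendsto_const_nhds.div_atTop
        (tendsto_pow_atTop_atTop_of_one_lt one_lt_two), .of_forall hrad⟩)
  have hdist := dist_le_tsum_of_dist_le_of_tendsto₀ _ hstep hsum hlim
  rw [tsum_mul_left, tsum_geometric_of_lt_one hq₀ hq₁] at hdist
  calc |f x - ⨍ y in ball x r, f y ∂μ| = dist (u 0) (f x) := by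
        simp [u, Real.dist_eq, abs_sub_comm]
    _ ≤ C_D * K * r ^ η * (1 - q)⁻¹ := hdist
    _ = C_D * (1 - q)⁻¹ * K * r ^ η := by ring

end Doubling

noncomputable def morreyCampanatoConst (C_D η : ℝ) : ℝ :=
  C_D * (1 - (2 ^ η)⁻¹)⁻¹ * (2 ^ η + 1) + C_D ^ 2 * 2 ^ η

theorem morreyCampanatoConst_pos {C_D η : ℝ} (hC_D : 0 < C_D) (hη : 0 < η) :
    0 < morreyCampanatoConst C_D η := by
  have hq : 0 < 1 - ((2 : ℝ) ^ η)⁻¹ :=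
    sub_pos.2 (inv_lt_one_of_one_lt₀ (Real.one_lt_rpow one_lt_two hη))
  unfold morreyCampanatoConst
  positivity

theorem LebesguePt.abs_sub_le_of_posc_le {M : Type*} [MetricSpace M] [MeasurableSpace M]
    {μ : Measure M} {C_D : ℝ} (hdoub : IsDoublingWith μ C_D) (hC_D : 0 ≤ C_D)
    (hμ : ∀ (x : M) (r : ℝ), 0 < r → 0 < μ (ball x r) ∧ μ (ball x r) < ⊤)
    {p : ℝ} (hp : 1 ≤ p) {f : M → ℝ}
    (hf : ∀ (z : M) (ρ : ℝ), 0 < ρ → MemLp f (ENNReal.ofReal p) (μ.restrict (ball z ρ)))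
    {η : ℝ} (hη : 0 < η) {x y : M} (hx : LebesguePt μ f x) (hy : LebesguePt μ f y) {K : ℝ}
    (hKx : ∀ ρ, 0 < ρ → ρ ≤ 2 * dist x y → posc μ p (ball x ρ) f ≤ K * ρ ^ η)
    (hKy : ∀ ρ, 0 < ρ → ρ ≤ dist x y → posc μ p (ball y ρ) f ≤ K * ρ ^ η) :
    |f x - f y| ≤ morreyCampanatoConst C_D η * dist x y ^ η * K := by
  obtain rfl | hxy := eq_or_ne x y
  · simp [Real.zero_rpow hη.ne']
  set d := dist x y
  have hd : 0 < d := dist_pos.2 hxy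
  have h2d : 0 < 2 * d := by positivity
  set a := ⨍ z in ball x (2 * d), f z ∂μ
  set b := ⨍ z in ball y d, f z ∂μ
  have hx_a := hx.abs_sub_setAverage_ball_le hdoub hC_D (hμ x) hp (hf x) hη h2d hKx
  have hy_b := hy.abs_sub_setAverage_ball_le hdoub hC_D (hμ y) hp (hf y) hη hd hKy
  have hb_a : |b - a| ≤ C_D ^ 2 * (K * (2 * d) ^ η) :=
    (abs_setAverage_sub_setAverage_le_mul_posc
      (ball_subset_ball' (by rw [dist_comm]; linarith)) (hμ y d hd).1.ne' (hμ x _ h2d).2.ne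
      (sq_nonneg C_D) (hdoub.measure_ball_two_mul_le_sq_mul hC_D hd le_rfl) hp (hf x _ h2d)).trans
      (mul_le_mul_of_nonneg_left (hKx _ h2d le_rfl) (sq_nonneg C_D))
  rw [Real.mul_rpow zero_le_two hd.le] at hx_a hb_a
  calc |f x - f y| ≤ |f x - a| + |b - a| + |f y - b| := by
        linarith [abs_sub_le (f x) a (f y), abs_sub_le a b (f y), abs_sub_comm a b,
          abs_sub_comm b (f y)]
    _ ≤ morreyCampanatoConst C_D η * d ^ η * K := by
        unfold morreyCampanatoConst
        linarith

theorem morrey_campanato_embedding_general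
    {M : Type*} [MetricSpace M] [MeasurableSpace M]
    (μ : Measure M) (C_D : ℝ) (hC_D : 1 ≤ C_D) (hdoub : IsDoublingWith μ C_D)
    (hμ : ∀ (x : M) (r : ℝ), 0 < r → 0 < μ (ball x r) ∧ μ (ball x r) < ⊤)
    (p : ℝ) (hp : 1 ≤ p) (η : ℝ) (hη : 0 < η) :
    ∃ C : ℝ, 0 < C ∧ ∀ f : M → ℝ,
      (∀ (z : M) (ρ : ℝ), 0 < ρ → MemLp f (ENNReal.ofReal p) (μ.restrict (ball z ρ))) →
      ∀ (x₀ : M) (R : ℝ), 0 < R →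
      ∀ x ∈ ball x₀ R, ∀ y ∈ ball x₀ R,
      LebesguePt μ f x → LebesguePt μ f y →
      ∀ K : ℝ,
        (∀ (z : M) (ρ : ℝ), 0 < ρ → ball z ρ ⊆ ball x₀ (6 * R) →
          posc μ p (ball z ρ) f ≤ K * ρ ^ η) →
        |f x - f y| ≤ C * dist x y ^ η * K := by
  refine ⟨morreyCampanatoConst C_D η, morreyCampanatoConst_pos (by linarith) hη, ?_⟩
  intro f hf x₀ R _ x hx y hy hLx hLy K hK
  have hxy : dist x y < 2 * R := by
    linarith [dist_triangle_right x y x₀, mem_ball.1 hx, mem_ball.1 hy]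
  refine hLx.abs_sub_le_of_posc_le hdoub (by linarith) hμ hp hf hη hLy
    (fun ρ hρ hρd => hK x ρ hρ (ball_subset_ball' ?_))
    (fun ρ hρ hρd => hK y ρ hρ (ball_subset_ball' ?_))
  · linarith [mem_ball.1 hx]
  · linarith [mem_ball.1 hy]

/-- **Morrey–Campanato embedding** (Lemma 3.3).  On a doubling metric measure
space, for `p ∈ [1,∞)` and `η > 0`, there is a constant `C` (depending only on
the doubling constant, `p` and `η`) such that for every `f ∈ L^p_loc`, every
ball `B = B(x₀, R)`, all Lebesgue points `x, y ∈ B` of `f`, and every upper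
bound `K` for `r(B̃)^{-η} · p-osc_{B̃}(f)` over all balls `B̃ ⊆ 6B`, one has
`|f x - f y| ≤ C · d(x,y)^η · K`. -/
theorem morrey_campanato_embedding
    {M : Type*} [MetricSpace M] [MeasurableSpace M] [BorelSpace M]
    (μ : Measure M) (C_D : ℝ) (hC_D : 1 ≤ C_D) (hdoub : IsDoublingWith μ C_D)
    (hμ : ∀ (x : M) (r : ℝ), 0 < r → 0 < μ (ball x r) ∧ μ (ball x r) < ⊤)
    (p : ℝ) (hp : 1 ≤ p) (η : ℝ) (hη : 0 < η) :
    ∃ C : ℝ, 0 < C ∧ ∀ f : M → ℝ,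
      (∀ (z : M) (ρ : ℝ), 0 < ρ → MemLp f (ENNReal.ofReal p) (μ.restrict (ball z ρ))) →
      ∀ (x₀ : M) (R : ℝ), 0 < R →
      ∀ x ∈ ball x₀ R, ∀ y ∈ ball x₀ R,
      LebesguePt μ f x → LebesguePt μ f y →
      ∀ K : ℝ,
        (∀ (z : M) (ρ : ℝ), 0 < ρ → ball z ρ ⊆ ball x₀ (6 * R) →
          posc μ p (ball z ρ) f ≤ K * ρ ^ η) →
        |f x - f y| ≤ C * dist x y ^ η * K :=
  morrey_campanato_embedding_general μ C_D hC_D hdoub hμ p hp η hη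
end

section
/- Let 0 < r < R and let A : [r,R] → [0,∞) satisfy A(s) ≤ C₀ (s'/s)^θ A(s') for all r ≤ s ≤ s' ≤ R, for some constants C₀ ≥ 1 and θ > 0. Let B : [r,R] → [0,∞), and assume that for some ε ∈ (0,1), γ > 0 and C₁ ≥ 1 one has A(s) ≤ C₁ [ (s'/s)^ε A(s') + (s'/s)^γ s' B(s') ] for all r ≤ s ≤ s' ≤ R. Then for every ε' ∈ (ε,1) there is a constant C, depending only on C₀, C₁, θ, ε, ε', γ (and not on r, R, A, B), such that A(r) ≤ C (R/r)^{ε'} [ A(R) + R · sup_{r ≤ u ≤ R} B(u) ]. (Iteration lemma, Lemma 5.4 of the paper.) -/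
/-!
Choose `q > 1` with `C₁ q^ε ≤ q^ε'`. Applying the second hypothesis between consecutive points of
the grid `r, q r, q² r, …` (truncated at `R`) gives `A(x) ≤ M A(x') + K` with `M = C₁ q^ε` and
`K = C₁ q^γ R S`. After the `N ≈ log_q (R/r)` steps needed to reach `R`, this yields
`A(r) ≤ M^N (A(R) + K / (M - 1))`, and `M^N ≤ (q^N)^ε' ≤ (q R/r)^ε'`.
-/

open Finset

theorem le_pow_mul_add_mul_geom_sum {α : Type*} [CommSemiring α] [PartialOrder α]
    [IsOrderedRing α] {M K : α} (hM : 0 ≤ M) :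
    ∀ (N : ℕ) (a : ℕ → α), (∀ n < N, a n ≤ M * a (n + 1) + K) →
      a 0 ≤ M ^ N * a N + K * ∑ j ∈ range N, M ^ j
  | 0, a, _ => by simp
  | N + 1, a, h => by
    have ih := le_pow_mul_add_mul_geom_sum hM N (fun n ↦ a (n + 1))
      fun n hn ↦ h (n + 1) (by omega)
    calc a 0 ≤ M * a 1 + K := h 0 N.succ_pos
      _ ≤ M * (M ^ N * a (N + 1) + K * ∑ j ∈ range N, M ^ j) + K := by gcongr
      _ = M ^ (N + 1) * a (N + 1) + K * ∑ j ∈ range (N + 1), M ^ j := by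
        rw [geom_sum_succ]; ring

theorem geom_sum_le_pow_div_sub_one {α : Type*} [Field α] [LinearOrder α]
    [IsStrictOrderedRing α] {M : α} (hM : 1 < M) (N : ℕ) :
    ∑ j ∈ range N, M ^ j ≤ M ^ N / (M - 1) := by
  rw [geom_sum_eq hM.ne']
  gcongr
  linarith

theorem exists_pow_mem_Icc_mul {α : Type*} [Field α] [LinearOrder α] [IsStrictOrderedRing α]
    [Archimedean α] {q t : α} (hq : 1 < q) (ht : 1 ≤ t) :
    ∃ N : ℕ, t ≤ q ^ N ∧ q ^ N ≤ q * t := by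
  obtain ⟨n, hle, hlt⟩ := exists_nat_pow_near ht hq
  exact ⟨n + 1, hlt.le, by rw [pow_succ']; gcongr⟩

theorem Real.exists_one_lt_mul_rpow_le_rpow {c a b : ℝ} (hc : 0 ≤ c) (hab : a < b) :
    ∃ q > 1, c * q ^ a ≤ q ^ b := by
  set q := max 2 (c ^ (b - a)⁻¹)
  have hq : 1 < q := one_lt_two.trans_le (le_max_left _ _)
  have hcq : c ≤ q ^ (b - a) :=
    calc c = (c ^ (b - a)⁻¹) ^ (b - a) := (Real.rpow_inv_rpow hc (sub_pos.2 hab).ne').symm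
      _ ≤ q ^ (b - a) := by gcongr; exact le_max_right _ _
  refine ⟨q, hq, ?_⟩
  calc c * q ^ a ≤ q ^ (b - a) * q ^ a := by gcongr
    _ = q ^ b := by rw [← Real.rpow_add (by linarith), sub_add_cancel]

theorem le_pow_mul_add_mul_geom_sum_of_forall_le_mul_add {A : ℝ → ℝ} {r R q M K : ℝ}
    (hr : 0 ≤ r) (hrR : r ≤ R) (hq : 1 ≤ q) (hM : 0 ≤ M)
    (hstep : ∀ x y, r ≤ x → x ≤ y → y ≤ R → y ≤ q * x → A x ≤ M * A y + K)
    {N : ℕ} (hN : R ≤ q ^ N * r) :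
    A r ≤ M ^ N * A R + K * ∑ j ∈ range N, M ^ j := by
  set x : ℕ → ℝ := fun n ↦ min (q ^ n * r) R
  have hx_step (n : ℕ) : A (x n) ≤ M * A (x (n + 1)) + K := by
    refine hstep _ _ (le_min (le_mul_of_one_le_left hr (one_le_pow₀ hq)) hrR) ?_
      (min_le_right _ _) ?_
    · refine min_le_min_right _ ?_
      rw [pow_succ, mul_right_comm]
      exact le_mul_of_one_le_right (by positivity) hq
    · rw [mul_min_of_nonneg _ _ (by linarith), ← mul_assoc, ← pow_succ']
      exact min_le_min_left _ (le_mul_of_one_le_left (by linarith) hq)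
  have := le_pow_mul_add_mul_geom_sum hM N (A ∘ x) fun n _ ↦ hx_step n
  simpa [x, min_eq_left hrR, min_eq_right hN] using this

theorem rpow_mul_add_rpow_mul_mul_le {t q a b y R S ε γ : ℝ} (ht : 0 ≤ t) (htq : t ≤ q)
    (hε : 0 ≤ ε) (hγ : 0 ≤ γ) (ha : 0 ≤ a) (hb : 0 ≤ b) (hbS : b ≤ S) (hy : 0 ≤ y)
    (hyR : y ≤ R) :
    t ^ ε * a + t ^ γ * y * b ≤ q ^ ε * a + q ^ γ * (R * S) := by
  rw [mul_assoc (t ^ γ)]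
  gcongr
  · exact Real.rpow_nonneg (ht.trans htq) _
  · exact hy.trans hyR

theorem iteration_lemma_general
    (C₀ C₁ θ ε γ ε' : ℝ) (hC₁ : 1 ≤ C₁)
    (hε : ε ∈ Set.Ioo (0 : ℝ) 1) (hγ : 0 < γ) (hε' : ε' ∈ Set.Ioo ε 1) :
    ∃ C : ℝ, 0 < C ∧ ∀ (r R : ℝ) (A B : ℝ → ℝ), 0 < r → r < R →
      (∀ s ∈ Set.Icc r R, 0 ≤ A s) →
      (∀ u ∈ Set.Icc r R, 0 ≤ B u) →
      (∀ s s' : ℝ, r ≤ s → s ≤ s' → s' ≤ R → A s ≤ C₀ * (s' / s) ^ θ * A s') →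
      (∀ s s' : ℝ, r ≤ s → s ≤ s' → s' ≤ R →
        A s ≤ C₁ * ((s' / s) ^ ε * A s' + (s' / s) ^ γ * s' * B s')) →
      ∀ S : ℝ, (∀ u ∈ Set.Icc r R, B u ≤ S) →
        A r ≤ C * (R / r) ^ ε' * (A R + R * S) := by
  obtain ⟨q, hq, hMq⟩ := Real.exists_one_lt_mul_rpow_le_rpow (c := C₁) (by linarith) hε'.1
  have hq0 : 0 < q := by linarith
  set M := C₁ * q ^ ε
  have hM : 1 < M := one_lt_mul_of_le_of_lt hC₁ (Real.one_lt_rpow hq hε.1)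
  have hM1 : 0 < M - 1 := sub_pos.2 hM
  set c := C₁ * q ^ γ / (M - 1)
  have hc : 0 ≤ c := div_nonneg (by positivity) hM1.le
  refine ⟨q ^ ε' * (1 + c), by positivity, ?_⟩
  intro r R A B hr hrR hA0 hB0 _ hA S hS
  have hR0 : 0 < R := hr.trans hrR
  have hR : R ∈ Set.Icc r R := ⟨hrR.le, le_rfl⟩
  have hAR : 0 ≤ A R := hA0 R hR
  have hRS : 0 ≤ R * S := mul_nonneg hR0.le ((hB0 R hR).trans (hS R hR))
  have hstep (x y : ℝ) (hx : r ≤ x) (hxy : x ≤ y) (hy : y ≤ R) (hyq : y ≤ q * x) :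
      A x ≤ M * A y + C₁ * q ^ γ * (R * S) := by
    have hx0 : 0 < x := hr.trans_le hx
    have hy' : y ∈ Set.Icc r R := ⟨hx.trans hxy, hy⟩
    calc A x ≤ C₁ * ((y / x) ^ ε * A y + (y / x) ^ γ * y * B y) := hA x y hx hxy hy
      _ ≤ C₁ * (q ^ ε * A y + q ^ γ * (R * S)) := by
        refine mul_le_mul_of_nonneg_left ?_ (by linarith)
        exact rpow_mul_add_rpow_mul_mul_le (div_nonneg (hx0.trans_le hxy).le hx0.le)
          ((div_le_iff₀ hx0).2 hyq) hε.1.le hγ.le (hA0 y hy') (hB0 y hy') (hS y hy')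
          (hx0.trans_le hxy).le hy
      _ = M * A y + C₁ * q ^ γ * (R * S) := by ring
  obtain ⟨N, hN, hNq⟩ := exists_pow_mem_Icc_mul hq ((one_le_div hr).2 hrR.le)
  have hMN : M ^ N ≤ q ^ ε' * (R / r) ^ ε' :=
    calc M ^ N ≤ (q ^ ε') ^ N := by gcongr
      _ = (q ^ N) ^ ε' := Real.rpow_pow_comm hq0.le ε' N
      _ ≤ (q * (R / r)) ^ ε' := by gcongr; linarith [hε'.1, hε.1]
      _ = q ^ ε' * (R / r) ^ ε' := Real.mul_rpow hq0.le (by positivity)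
  calc A r ≤ M ^ N * A R + C₁ * q ^ γ * (R * S) * ∑ j ∈ range N, M ^ j :=
        le_pow_mul_add_mul_geom_sum_of_forall_le_mul_add hr.le hrR.le hq.le (by linarith) hstep
          ((div_le_iff₀ hr).1 hN)
    _ ≤ M ^ N * A R + C₁ * q ^ γ * (R * S) * (M ^ N / (M - 1)) := by
      gcongr; exact geom_sum_le_pow_div_sub_one hM N
    _ = M ^ N * (A R + c * (R * S)) := by simp only [c]; field_simp
    _ ≤ q ^ ε' * (R / r) ^ ε' * ((1 + c) * (A R + R * S)) :=
      mul_le_mul hMN (by nlinarith) (by positivity) (by positivity)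
    _ = q ^ ε' * (1 + c) * (R / r) ^ ε' * (A R + R * S) := by ring

/-- **Iteration lemma** (Lemma 5.4).  If `A : [r,R] → [0,∞)` satisfies
`A(s) ≤ C₀ (s'/s)^θ A(s')` and
`A(s) ≤ C₁ [(s'/s)^ε A(s') + (s'/s)^γ s' B(s')]` for all `r ≤ s ≤ s' ≤ R`,
then for every `ε' ∈ (ε,1)` there is `C`, depending only on
`C₀, C₁, θ, ε, ε', γ` (and not on `r, R, A, B`), such that
`A(r) ≤ C (R/r)^{ε'} [A(R) + R · sup_{r ≤ u ≤ R} B(u)]`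
(the supremum being expressed through an arbitrary upper bound `S`). -/
theorem iteration_lemma
    (C₀ C₁ θ ε γ ε' : ℝ) (hC₀ : 1 ≤ C₀) (hC₁ : 1 ≤ C₁) (hθ : 0 < θ)
    (hε : ε ∈ Set.Ioo (0 : ℝ) 1) (hγ : 0 < γ) (hε' : ε' ∈ Set.Ioo ε 1) :
    ∃ C : ℝ, 0 < C ∧ ∀ (r R : ℝ) (A B : ℝ → ℝ), 0 < r → r < R →
      (∀ s ∈ Set.Icc r R, 0 ≤ A s) →
      (∀ u ∈ Set.Icc r R, 0 ≤ B u) →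
      (∀ s s' : ℝ, r ≤ s → s ≤ s' → s' ≤ R → A s ≤ C₀ * (s' / s) ^ θ * A s') →
      (∀ s s' : ℝ, r ≤ s → s ≤ s' → s' ≤ R →
        A s ≤ C₁ * ((s' / s) ^ ε * A s' + (s' / s) ^ γ * s' * B s')) →
      ∀ S : ℝ, (∀ u ∈ Set.Icc r R, B u ≤ S) →
        A r ≤ C * (R / r) ^ ε' * (A R + R * S) :=
  iteration_lemma_general C₀ C₁ θ ε γ ε' hC₁ hε hγ hε'
end

section
/- Let (X,μ) be a measure space, let B ⊆ X be measurable with 0 < μ(B) < ∞, let p ∈ [1,∞), and let f ∈ L^p(B,μ). Set N = { x ∈ B : f(x) = 0 } and assume μ(N) > 0. Then (∫_B |f|^p dμ)^{1/p} ≤ C_p · (μ(B)/μ(N)) · (∫_B |f − ⨍_B f dμ|^p dμ)^{1/p}, where C_p is a constant depending only on p (one may take C_p comparable to p). (This is the inequality proved in Appendix A of the paper to deduce the modified Poincaré inequality (P̃_{2−ε}) from (P_{2−ε}); its proof uses the elementary inequality 1 − (1−x)^{1/p} ≥ x/p for x ∈ [0,1] and p ≥ 1.) -/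
/-!
On the zero set `N` one has `|f - c| = |c|` for every constant `c`, so Chebyshev's inequality
gives `|c| μ(N)^{1/p} ≤ ‖f - c‖_p`. Minkowski's inequality then yields
`‖f‖_p ≤ ‖f - c‖_p + |c| μ(B)^{1/p} ≤ (1 + (μ(B)/μ(N))^{1/p}) ‖f - c‖_p`,
which is at most `2 (μ(B)/μ(N)) ‖f - c‖_p`; one takes `c = ⨍_B f`.
-/

open MeasureTheory
open scoped ENNReal

section

variable {α E : Type*} [MeasurableSpace α] [NormedAddCommGroup E] {ν : Measure α}
  {p : ℝ≥0∞} {f : α → E}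

theorem enorm_mul_measure_zero_rpow_le_eLpNorm_sub (hp0 : p ≠ 0) (hp_top : p ≠ ∞)
    (hf : AEStronglyMeasurable f ν) (c : E) :
    ‖c‖ₑ * ν {x | f x = 0} ^ (1 / p.toReal) ≤ eLpNorm (fun x => f x - c) p ν := by
  have hp_pos : 0 < p.toReal := ENNReal.toReal_pos hp0 hp_top
  have markov :
      ‖c‖ₑ ^ p.toReal * ν {x | f x = 0} ≤ eLpNorm (fun x => f x - c) p ν ^ p.toReal :=
    calc ‖c‖ₑ ^ p.toReal * ν {x | f x = 0}
        ≤ ‖c‖ₑ ^ p.toReal * ν {x | ‖c‖ₑ ≤ ‖f x - c‖ₑ} :=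
          mul_le_mul_right (measure_mono fun x (hx : f x = 0) => by simp [hx]) _
      _ ≤ _ := mul_meas_ge_le_pow_eLpNorm' ν hp0 hp_top (hf.sub aestronglyMeasurable_const) _
  rwa [← ENNReal.rpow_le_rpow_iff hp_pos, ENNReal.mul_rpow_of_nonneg _ _ hp_pos.le,
    ← ENNReal.rpow_mul, one_div_mul_cancel hp_pos.ne', ENNReal.rpow_one]

theorem eLpNorm_le_one_add_measure_div_rpow_mul_eLpNorm_sub [IsFiniteMeasure ν]
    (hp : 1 ≤ p) (hp_top : p ≠ ∞) (hf : AEStronglyMeasurable f ν) (c : E)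
    (hN : ν {x | f x = 0} ≠ 0) :
    eLpNorm f p ν ≤ (1 + (ν Set.univ / ν {x | f x = 0}) ^ (1 / p.toReal)) *
      eLpNorm (fun x => f x - c) p ν := by
  have hp0 : p ≠ 0 := (one_pos.trans_le hp).ne'
  set N := {x | f x = 0}
  set D := eLpNorm (fun x => f x - c) p ν
  have hconst :
      ‖c‖ₑ * ν Set.univ ^ (1 / p.toReal) ≤ (ν Set.univ / ν N) ^ (1 / p.toReal) * D :=
    calc ‖c‖ₑ * ν Set.univ ^ (1 / p.toReal)
        = (ν Set.univ / ν N) ^ (1 / p.toReal) * (‖c‖ₑ * ν N ^ (1 / p.toReal)) := by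
          conv_lhs => rw [← ENNReal.div_mul_cancel hN (measure_ne_top ν N) (b := ν Set.univ)]
          rw [ENNReal.mul_rpow_of_nonneg _ _ (by positivity)]
          ring
      _ ≤ (ν Set.univ / ν N) ^ (1 / p.toReal) * D := by
          gcongr
          exact enorm_mul_measure_zero_rpow_le_eLpNorm_sub hp0 hp_top hf c
  calc eLpNorm f p ν = eLpNorm ((fun x => f x - c) + fun _ => c) p ν := by
        congr 1; ext; simp
    _ ≤ D + eLpNorm (fun _ => c) p ν :=
        eLpNorm_add_le (hf.sub aestronglyMeasurable_const) aestronglyMeasurable_const hp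
    _ = D + ‖c‖ₑ * ν Set.univ ^ (1 / p.toReal) := by rw [eLpNorm_const' c hp0 hp_top]
    _ ≤ D + (ν Set.univ / ν N) ^ (1 / p.toReal) * D := by gcongr
    _ = _ := by ring

end

theorem ENNReal.one_add_rpow_le_two_mul {r : ℝ≥0∞} {s : ℝ} (hr : 1 ≤ r) (hs : s ≤ 1) :
    1 + r ^ s ≤ 2 * r :=
  calc 1 + r ^ s ≤ r + r ^ (1 : ℝ) := by gcongr
    _ = 2 * r := by rw [ENNReal.rpow_one, two_mul]

theorem MeasureTheory.MemLp.toReal_eLpNorm_ofReal {α : Type*} [MeasurableSpace α]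
    {ν : Measure α} {p : ℝ} (hp : 0 < p) {f : α → ℝ} (hf : MemLp f (ENNReal.ofReal p) ν) :
    (eLpNorm f (ENNReal.ofReal p) ν).toReal = (∫ x, |f x| ^ p ∂ν) ^ (1 / p) := by
  rw [hf.eLpNorm_eq_integral_rpow_norm (by simpa using hp) ENNReal.ofReal_ne_top,
    ENNReal.toReal_ofReal hp.le, ENNReal.toReal_ofReal (by positivity), one_div]
  simp only [Real.norm_eq_abs]

/-- The inequality of Appendix A used to deduce `(P̃_{2−ε})` from `(P_{2−ε})`:
on a measure space, if `B` has finite positive measure, `f ∈ L^p(B)` and the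
zero set `N = {x ∈ B : f(x) = 0}` has positive measure, then
`(∫_B |f|^p)^{1/p} ≤ C_p (μ(B)/μ(N)) (∫_B |f − ⨍_B f|^p)^{1/p}`
with `C_p` depending only on `p`. -/
theorem norm_le_oscillation_of_vanishes
    {X : Type*} [MeasurableSpace X] (μ : Measure X) (p : ℝ) (hp : 1 ≤ p) :
    ∃ C : ℝ, 0 < C ∧ ∀ (B : Set X) (f : X → ℝ),
      MeasurableSet B → 0 < μ B → μ B < ⊤ →
      MemLp f (ENNReal.ofReal p) (μ.restrict B) →
      0 < μ {x ∈ B | f x = 0} →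
      (∫ x in B, |f x| ^ p ∂μ) ^ (1 / p) ≤
        C * ((μ B).toReal / (μ {x ∈ B | f x = 0}).toReal) *
          (∫ x in B, |f x - ⨍ y in B, f y ∂μ| ^ p ∂μ) ^ (1 / p) := by
  refine ⟨2, two_pos, fun B f hB _ hB_top hf hN => ?_⟩
  set N := {x ∈ B | f x = 0}
  set c := ⨍ y in B, f y ∂μ
  have : IsFiniteMeasure (μ.restrict B) := isFiniteMeasure_restrict.2 hB_top.ne
  have hp_pos : 0 < p := one_pos.trans_le hp
  have hN_restrict : μ.restrict B {x | f x = 0} = μ N := by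
    rw [Measure.restrict_apply' hB, Set.inter_comm]; rfl
  have hratio : 1 ≤ μ B / μ N := by
    rw [ENNReal.le_div_iff_mul_le (.inl hN.ne') (.inr hB_top.ne), one_mul]
    exact measure_mono fun x hx => hx.1
  have hexp : 1 / (ENNReal.ofReal p).toReal ≤ 1 := by
    rw [ENNReal.toReal_ofReal hp_pos.le]; exact div_le_one_of_le₀ hp hp_pos.le
  have hsharp := eLpNorm_le_one_add_measure_div_rpow_mul_eLpNorm_sub
    (by simpa using ENNReal.ofReal_le_ofReal hp) ENNReal.ofReal_ne_top hf.aestronglyMeasurable c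
    (hN_restrict ▸ hN.ne')
  rw [Measure.restrict_apply_univ, hN_restrict] at hsharp
  have hbound := hsharp.trans (mul_le_mul_left (ENNReal.one_add_rpow_le_two_mul hratio hexp) _)
  have hfc := hf.sub (memLp_const c)
  have hreal := ENNReal.toReal_mono (ENNReal.mul_ne_top (ENNReal.mul_ne_top ENNReal.ofNat_ne_top
    (ENNReal.div_ne_top hB_top.ne hN.ne')) hfc.eLpNorm_ne_top) hbound
  rwa [hf.toReal_eLpNorm_ofReal hp_pos, ENNReal.toReal_mul, ENNReal.toReal_mul,
    ENNReal.toReal_ofNat, hfc.toReal_eLpNorm_ofReal hp_pos, ENNReal.toReal_div] at hreal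
end
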